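/- arXiv:1711.00120 — 3 statements merged into one kernel-verified Lean document; each statement's English description precedes it below -/
import Mathlib

section
/- Let θ, φ ∈ ℝ with sin φ cos θ ≠ 0 and r = (r_x, r_y, r_z) ∈ ℝ³. For every point p = (0, y, z) in the plane x = 0, the squared Euclidean distance from p to the line {r + t·d(θ,φ) : t ∈ ℝ} (i.e., the square of the infimum of ‖p − (r + t·d)‖ over t ∈ ℝ) equals ρ_y (y−f_y)² + ρ_z (z−f_z)² + 2 ρ_yz (y−f_y)(z−f_z), where f_y = r_y − r_x tan θ and f_z = r_z − r_x (cot φ)/(cos θ). -/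
/-!
The footprint `f = (0, f_y, f_z)` is the point where the beam line meets the plane `x = 0`
(parameter `t = -r_x / (sin φ cos θ)`), so the line is `{f + t • d}`. As `d` is a unit vector,
the squared distance from `p` to it is `‖p - f‖² - ⟪p - f, d⟫²`, and with `p - f = (0, y - f_y, z - f_z)`
this is the stated quadratic form.
-/

open RealInnerProductSpace

section UnitDirection

variable {E : Type*} [NormedAddCommGroup E] [InnerProductSpace ℝ E] {d : E}

theorem norm_sub_smul_sq_of_norm_eq_one (hd : ‖d‖ = 1) (v : E) (t : ℝ) :
    ‖v - t • d‖ ^ 2 = ‖v‖ ^ 2 - ⟪v, d⟫ ^ 2 + (t - ⟪v, d⟫) ^ 2 := by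
  rw [norm_sub_sq_real, inner_smul_right, norm_smul, hd, Real.norm_eq_abs]
  ring_nf
  rw [sq_abs]

theorem sq_iInf_norm_sub_smul_of_norm_eq_one (hd : ‖d‖ = 1) (v : E) :
    (⨅ t : ℝ, ‖v - t • d‖) ^ 2 = ‖v‖ ^ 2 - ⟪v, d⟫ ^ 2 := by
  have hmin : ∀ t : ℝ, ‖v - ⟪v, d⟫ • d‖ ≤ ‖v - t • d‖ := fun t => by
    refine (pow_le_pow_iff_left₀ (norm_nonneg _) (norm_nonneg _) two_ne_zero).mp ?_
    rw [norm_sub_smul_sq_of_norm_eq_one hd, norm_sub_smul_sq_of_norm_eq_one hd]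
    nlinarith [sq_nonneg (t - ⟪v, d⟫)]
  have hinf : ⨅ t : ℝ, ‖v - t • d‖ = ‖v - ⟪v, d⟫ • d‖ :=
    le_antisymm (ciInf_le ⟨0, by rintro _ ⟨t, rfl⟩; positivity⟩ _) (le_ciInf hmin)
  rw [hinf, norm_sub_smul_sq_of_norm_eq_one hd, sub_self, zero_pow two_ne_zero, add_zero]

end UnitDirection

theorem iInf_norm_sub_add_smul {E : Type*} [SeminormedAddCommGroup E] [Module ℝ E]
    (p r d : E) (s : ℝ) :
    ⨅ t : ℝ, ‖p - (r + t • d)‖ = ⨅ t : ℝ, ‖p - (r + s • d) - t • d‖ := by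
  rw [← (Equiv.addRight s).iInf_comp]
  congr 1 with t
  rw [Equiv.coe_addRight, add_smul]
  abel_nf

namespace EuclideanSpace

variable (a b c a' b' c' : ℝ)

theorem equiv_symm_three_sub :
    (equiv (Fin 3) ℝ).symm ![a, b, c] - (equiv (Fin 3) ℝ).symm ![a', b', c'] =
      (equiv (Fin 3) ℝ).symm ![a - a', b - b', c - c'] := by
  ext i
  fin_cases i <;> rfl

theorem norm_sq_equiv_symm_three :
    ‖(equiv (Fin 3) ℝ).symm ![a, b, c]‖ ^ 2 = a ^ 2 + b ^ 2 + c ^ 2 := by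
  simp [norm_sq_eq, Fin.sum_univ_three]

theorem inner_equiv_symm_three :
    ⟪(equiv (Fin 3) ℝ).symm ![a, b, c], (equiv (Fin 3) ℝ).symm ![a', b', c']⟫ =
      a * a' + b * b' + c * c' := by
  simp only [PiLp.continuousLinearEquiv_symm_apply, inner_eq_star_dotProduct, star_trivial,
    Matrix.dotProduct_cons, Matrix.head_cons, Matrix.tail_cons, Matrix.dotProduct_of_isEmpty,
    add_zero]
  ring

end EuclideanSpace

/-- Squared Euclidean distance from a point `(0,y,z)` in the photo-detector plane to the
beam line `{r + t • d(θ,φ)}` equals the quadratic form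
`ρ_y (y−f_y)² + ρ_z (z−f_z)² + 2 ρ_yz (y−f_y)(z−f_z)`. -/
theorem dist_sq_point_to_beam_line (θ φ rx ry rz y z : ℝ)
    (h : Real.sin φ * Real.cos θ ≠ 0) :
    let pt : ℝ → ℝ → ℝ → EuclideanSpace ℝ (Fin 3) :=
      fun a b c => (EuclideanSpace.equiv (Fin 3) ℝ).symm ![a, b, c]
    let d : EuclideanSpace ℝ (Fin 3) :=
      pt (Real.sin φ * Real.cos θ) (Real.sin φ * Real.sin θ) (Real.cos φ)
    let r : EuclideanSpace ℝ (Fin 3) := pt rx ry rz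
    let p : EuclideanSpace ℝ (Fin 3) := pt 0 y z
    let fy : ℝ := ry - rx * Real.tan θ
    let fz : ℝ := rz - rx * (Real.cos φ / Real.sin φ) / Real.cos θ
    let ρy : ℝ := Real.cos φ ^ 2 + Real.sin φ ^ 2 * Real.cos θ ^ 2
    let ρz : ℝ := Real.sin φ ^ 2
    let ρyz : ℝ := -(Real.cos φ * Real.sin φ * Real.sin θ)
    (⨅ t : ℝ, ‖p - (r + t • d)‖) ^ 2 =
      ρy * (y - fy) ^ 2 + ρz * (z - fz) ^ 2 + 2 * ρyz * (y - fy) * (z - fz) := by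
  intro pt d r p fy fz ρy ρz ρyz
  have hθ := Real.sin_sq_add_cos_sq θ
  have hφ := Real.sin_sq_add_cos_sq φ
  have hd : ‖d‖ = 1 := by
    rw [← pow_eq_one_iff_of_nonneg (norm_nonneg d) two_ne_zero, EuclideanSpace.norm_sq_equiv_symm_three]
    linear_combination Real.sin φ ^ 2 * hθ + hφ
  have hf : r + (-rx / (Real.sin φ * Real.cos θ)) • d = pt 0 fy fz := by
    obtain ⟨hs, hc⟩ := mul_ne_zero_iff.mp h
    ext i
    fin_cases i <;>
      simp only [PiLp.continuousLinearEquiv_symm_apply, PiLp.add_apply, PiLp.smul_apply,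
        smul_eq_mul, Fin.isValue, Fin.zero_eta, Fin.mk_one, Fin.reduceFinMk, Matrix.cons_val_zero,
        Matrix.cons_val_one, Matrix.cons_val, Real.tan_eq_sin_div_cos, r, d, pt, fy, fz] <;>
      field_simp <;> ring
  rw [iInf_norm_sub_add_smul, hf, sq_iInf_norm_sub_smul_of_norm_eq_one hd,
    EuclideanSpace.equiv_symm_three_sub, EuclideanSpace.norm_sq_equiv_symm_three,
    EuclideanSpace.inner_equiv_symm_three]
  linear_combination (-(Real.sin φ) ^ 2 * (y - fy) ^ 2) * hθ - ((y - fy) ^ 2 + (z - fz) ^ 2) * hφ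
end

section
/- (Theorem 2, Hoyt density.) Let λ₁, λ₂ > 0 and let X, Y be independent real random variables with X ~ N(0, λ₁) and Y ~ N(0, λ₂). Then the law of u = √(X² + Y²) is absolutely continuous with respect to Lebesgue measure on ℝ, with density f(x) = (x/(2π√(λ₁λ₂))) ∫₀^{2π} exp(−x² (cos²t/(2λ₁) + sin²t/(2λ₂))) dt for x ≥ 0 and f(x) = 0 for x < 0. (This is the Hoyt/Nakagami-q distribution with parameters q = √(min{λ₁,λ₂}/max{λ₁,λ₂}) and Ω = λ₁ + λ₂.) -/
open MeasureTheory ProbabilityTheory Real Set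
open scoped ENNReal NNReal

/-!
In polar coordinates `(r, θ)` Lebesgue measure on the plane becomes `r dr dθ`, and the product of
the two centred Gaussian densities becomes
`(2π√(λ₁λ₂))⁻¹ exp (-r² (cos²θ / (2λ₁) + sin²θ / (2λ₂)))`. Integrating out the angle gives the
density of the radius `r = √(X² + Y²)`; by periodicity the angular integral over `(-π, π)`, the
range of `polarCoord`, equals the one over `[0, 2π]`.
-/

noncomputable def hoytPDFReal (v₁ v₂ : ℝ≥0) (x : ℝ) : ℝ :=
  if 0 ≤ x then
    x / (2 * π * √((v₁ : ℝ) * (v₂ : ℝ))) *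
      ∫ t in (0 : ℝ)..(2 * π),
        exp (-(x ^ 2) * (cos t ^ 2 / (2 * (v₁ : ℝ)) + sin t ^ 2 / (2 * (v₂ : ℝ))))
  else 0

theorem sqrt_sq_add_sq_polarCoord_symm {r : ℝ} (hr : 0 ≤ r) (θ : ℝ) :
    √((polarCoord.symm (r, θ)).1 ^ 2 + (polarCoord.symm (r, θ)).2 ^ 2) = r := by
  rw [polarCoord_symm_apply, mul_pow, mul_pow, ← mul_add, cos_sq_add_sin_sq, mul_one,
    sqrt_sq hr]

theorem map_sqrt_sq_add_sq_withDensity {f : ℝ × ℝ → ℝ≥0∞} (hf : Measurable f) :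
    (volume.withDensity f).map (fun p : ℝ × ℝ => √(p.1 ^ 2 + p.2 ^ 2)) =
      volume.withDensity ((Ioi 0).indicator
        fun r => ENNReal.ofReal r * ∫⁻ θ in Ioo (-π) π, f (polarCoord.symm (r, θ))) := by
  have hg : Measurable fun p : ℝ × ℝ => √(p.1 ^ 2 + p.2 ^ 2) := by fun_prop
  ext s hs
  have hmeas : Measurable fun q : ℝ × ℝ =>
      ENNReal.ofReal q.1 •
        ((fun p : ℝ × ℝ => √(p.1 ^ 2 + p.2 ^ 2)) ⁻¹' s).indicator f (polarCoord.symm q) := by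
    fun_prop (disch := exact hg hs)
  rw [Measure.map_apply hg hs, withDensity_apply _ (hg hs), withDensity_apply _ hs,
    ← lintegral_indicator (hg hs), ← lintegral_comp_polarCoord_symm, polarCoord_target,
    Measure.volume_eq_prod, ← Measure.prod_restrict, lintegral_prod _ hmeas.aemeasurable,
    ← lintegral_indicator hs, ← lintegral_indicator measurableSet_Ioi]
  refine lintegral_congr fun r => ?_
  by_cases hr : r ∈ Ioi 0
  · have hrθ (θ : ℝ) : polarCoord.symm (r, θ) ∈ (fun p : ℝ × ℝ => √(p.1 ^ 2 + p.2 ^ 2)) ⁻¹' s ↔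
        r ∈ s := by
      rw [mem_preimage, sqrt_sq_add_sq_polarCoord_symm (le_of_lt hr)]
    by_cases hrs : r ∈ s
    · simp only [indicator_of_mem hr, indicator_of_mem hrs,
        indicator_of_mem ((hrθ _).2 hrs), smul_eq_mul]
      exact lintegral_const_mul' _ _ ENNReal.ofReal_ne_top
    · simp only [indicator_of_mem hr, indicator_of_notMem hrs,
        indicator_of_notMem (mt (hrθ _).1 hrs), smul_zero, lintegral_zero]
  · rw [indicator_of_notMem hr, indicator_indicator, indicator_of_notMem fun h => hr h.2]

theorem gaussianReal_prod_gaussianReal (m₁ m₂ : ℝ) {v₁ v₂ : ℝ≥0} (hv₁ : v₁ ≠ 0) (hv₂ : v₂ ≠ 0) :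
    (gaussianReal m₁ v₁).prod (gaussianReal m₂ v₂) =
      volume.withDensity fun p => gaussianPDF m₁ v₁ p.1 * gaussianPDF m₂ v₂ p.2 := by
  rw [gaussianReal_of_var_ne_zero _ hv₁, gaussianReal_of_var_ne_zero _ hv₂,
    prod_withDensity (measurable_gaussianPDF _ _) (measurable_gaussianPDF _ _),
    Measure.volume_eq_prod]

theorem gaussianPDF_mul_gaussianPDF_polar (v₁ v₂ : ℝ≥0) (r θ : ℝ) :
    gaussianPDF 0 v₁ (r * cos θ) * gaussianPDF 0 v₂ (r * sin θ) =
      ENNReal.ofReal ((2 * π * √((v₁ : ℝ) * v₂))⁻¹ *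
        exp (-(r ^ 2) * (cos θ ^ 2 / (2 * (v₁ : ℝ)) + sin θ ^ 2 / (2 * (v₂ : ℝ))))) := by
  have hnorm : (√(2 * π * v₁))⁻¹ * (√(2 * π * v₂))⁻¹ = (2 * π * √((v₁ : ℝ) * v₂))⁻¹ := by
    rw [← mul_inv, ← sqrt_mul (by positivity),
      show 2 * π * v₁ * (2 * π * v₂) = (2 * π) ^ 2 * (v₁ * v₂ : ℝ) by ring,
      sqrt_mul (sq_nonneg _), sqrt_sq (by positivity)]
  simp only [gaussianPDF, gaussianPDFReal, sub_zero]
  rw [← ENNReal.ofReal_mul (by positivity), mul_mul_mul_comm, ← exp_add, hnorm]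
  congr 3
  ring

theorem Function.Periodic.lintegral_Ioo_ofReal {f : ℝ → ℝ} {T : ℝ} (hf : Function.Periodic f T)
    (hT : 0 ≤ T) (hcont : Continuous f) (hnonneg : 0 ≤ f) (a b : ℝ) :
    ∫⁻ x in Ioo a (a + T), ENNReal.ofReal (f x) = ENNReal.ofReal (∫ x in b..b + T, f x) := by
  rw [← hf.intervalIntegral_add_eq a b, intervalIntegral.integral_of_le (by linarith),
    ofReal_integral_eq_lintegral_ofReal hcont.integrableOn_Ioc (.of_forall hnonneg),
    setLIntegral_congr Ioo_ae_eq_Ioc]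

theorem map_sqrt_sq_add_sq_gaussianReal_prod {v₁ v₂ : ℝ≥0} (hv₁ : v₁ ≠ 0) (hv₂ : v₂ ≠ 0) :
    ((gaussianReal 0 v₁).prod (gaussianReal 0 v₂)).map (fun p : ℝ × ℝ => √(p.1 ^ 2 + p.2 ^ 2)) =
      volume.withDensity fun x => ENNReal.ofReal (hoytPDFReal v₁ v₂ x) := by
  rw [gaussianReal_prod_gaussianReal 0 0 hv₁ hv₂, map_sqrt_sq_add_sq_withDensity (by fun_prop)]
  congr 1
  funext r
  rcases lt_or_ge 0 r with hr | hr
  · have hper : Function.Periodic (fun θ => (2 * π * √((v₁ : ℝ) * v₂))⁻¹ *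
        exp (-(r ^ 2) * (cos θ ^ 2 / (2 * (v₁ : ℝ)) + sin θ ^ 2 / (2 * (v₂ : ℝ))))) (2 * π) :=
      fun θ => by simp only [cos_add_two_pi, sin_add_two_pi]
    have hangular := hper.lintegral_Ioo_ofReal (by positivity) (by fun_prop)
      (fun θ => by positivity) (-π) 0
    rw [show -π + 2 * π = π by ring, zero_add] at hangular
    simp only [indicator_of_mem (show r ∈ Ioi 0 from hr), polarCoord_symm_apply,
      gaussianPDF_mul_gaussianPDF_polar, hangular, intervalIntegral.integral_const_mul,
      hoytPDFReal, if_pos hr.le, ← ENNReal.ofReal_mul hr.le]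
    congr 1
    ring
  · rw [indicator_of_notMem (show r ∉ Ioi 0 from not_lt.2 hr), hoytPDFReal]
    split_ifs with hr₀
    · simp [le_antisymm hr hr₀]
    · simp

theorem hoyt_distribution_of_footprint_distance_general {Ω : Type*} [MeasurableSpace Ω]
    (μ : Measure Ω) (v₁ v₂ : NNReal)
    (h₁ : 0 < v₁) (h₂ : 0 < v₂) (X Y : Ω → ℝ)
    (hX : Measurable X) (hY : Measurable Y) (hindep : IndepFun X Y μ)
    (hlawX : μ.map X = gaussianReal 0 v₁) (hlawY : μ.map Y = gaussianReal 0 v₂) :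
    μ.map (fun ω => Real.sqrt (X ω ^ 2 + Y ω ^ 2)) =
      volume.withDensity (fun x => ENNReal.ofReal (
        if 0 ≤ x then
          x / (2 * Real.pi * Real.sqrt ((v₁ : ℝ) * (v₂ : ℝ))) *
            ∫ t in (0 : ℝ)..(2 * Real.pi),
              Real.exp (-(x ^ 2) *
                (Real.cos t ^ 2 / (2 * (v₁ : ℝ)) + Real.sin t ^ 2 / (2 * (v₂ : ℝ))))
        else 0)) := by
  have hlaw_pair : μ.map (fun ω => (X ω, Y ω)) = (gaussianReal 0 v₁).prod (gaussianReal 0 v₂) := by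
    have hσX : SigmaFinite (μ.map X) := by rw [hlawX]; infer_instance
    have hσY : SigmaFinite (μ.map Y) := by rw [hlawY]; infer_instance
    rw [← hlawX, ← hlawY]
    exact (indepFun_iff_map_prod_eq_prod_map_map' hX.aemeasurable hY.aemeasurable hσX hσY).mp
      hindep
  have hlaw_radius := map_sqrt_sq_add_sq_gaussianReal_prod h₁.ne' h₂.ne'
  rw [← hlaw_pair, Measure.map_map (by fun_prop) (hX.prodMk hY)] at hlaw_radius
  exact hlaw_radius

/-- Theorem 2 (Hoyt density): for independent `X ~ N(0,λ₁)`, `Y ~ N(0,λ₂)` with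
`λ₁, λ₂ > 0`, the law of `u = √(X² + Y²)` has Lebesgue density
`f(x) = (x/(2π√(λ₁λ₂))) ∫₀^{2π} exp(−x²(cos²t/(2λ₁) + sin²t/(2λ₂))) dt` for `x ≥ 0`
(and `0` for `x < 0`); this is the Hoyt (Nakagami-q) distribution. -/
theorem hoyt_distribution_of_footprint_distance {Ω : Type*} [MeasurableSpace Ω]
    (μ : Measure Ω) [IsProbabilityMeasure μ] (v₁ v₂ : NNReal)
    (h₁ : 0 < v₁) (h₂ : 0 < v₂) (X Y : Ω → ℝ)
    (hX : Measurable X) (hY : Measurable Y) (hindep : IndepFun X Y μ)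
    (hlawX : μ.map X = gaussianReal 0 v₁) (hlawY : μ.map Y = gaussianReal 0 v₂) :
    μ.map (fun ω => Real.sqrt (X ω ^ 2 + Y ω ^ 2)) =
      volume.withDensity (fun x => ENNReal.ofReal (
        if 0 ≤ x then
          x / (2 * Real.pi * Real.sqrt ((v₁ : ℝ) * (v₂ : ℝ))) *
            ∫ t in (0 : ℝ)..(2 * Real.pi),
              Real.exp (-(x ^ 2) *
                (Real.cos t ^ 2 / (2 * (v₁ : ℝ)) + Real.sin t ^ 2 / (2 * (v₂ : ℝ))))
        else 0)) :=
  hoyt_distribution_of_footprint_distance_general μ v₁ v₂ h₁ h₂ X Y hX hY hindep hlawX hlawY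
end

section
/- (PDF of the geometric loss in the orthogonal case, Eq. (16).) Let λ > 0, A₀ > 0, c > 0, and let X, Y be independent real random variables, each with law N(0, λ). Define W = A₀ · exp(−c (X² + Y²)) and ϱ = 1/(2λc). Then for every x with 0 ≤ x ≤ A₀ one has P(W ≤ x) = (x/A₀)^ϱ, and the law of W is absolutely continuous with respect to Lebesgue measure with density f(x) = (ϱ/A₀)(x/A₀)^{ϱ−1} for 0 < x < A₀ and f(x) = 0 otherwise. (With c = 2/(k_mean w²(L)) and λ = σ_p² + μ_x² σ_o², this is the paper's power-law density with ϱ = k_mean w²(L)/(4(σ_p² + μ_x² σ_o²)).) -/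
/-!
`X² + Y²` is exponentially distributed with mean `2λ`: in polar coordinates its tail is
`P(X² + Y² ≥ t) = exp (-t / (2λ))`. Since `W ≤ x` iff `X² + Y² ≥ log (A₀ / x) / c`, this
gives `P(W ≤ x) = (x / A₀) ^ ϱ` on `[0, A₀]`, which is also the distribution function of the
power-law density there. Both measures are carried by `(0, A₀]`, so they agree on every
half-line `(-∞, a]` and hence coincide.
-/

open MeasureTheory ProbabilityTheory
open Real Set Filter Topology
open scoped ENNReal NNReal

theorem integral_Ioi_mul_exp_neg_mul_sq {a b : ℝ} (ha : 0 ≤ a) (hb : 0 < b) :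
    ∫ r in Ioi a, r * exp (-b * r ^ 2) = exp (-b * a ^ 2) / (2 * b) := by
  have hderiv (r : ℝ) :
      HasDerivAt (fun r ↦ -exp (-b * r ^ 2) / (2 * b)) (r * exp (-b * r ^ 2)) r := by
    refine (((hasDerivAt_pow 2 r).const_mul (-b)).exp.neg.div_const (2 * b)).congr_deriv ?_
    field_simp
    ring
  have hlim : Tendsto (fun r ↦ -exp (-b * r ^ 2) / (2 * b)) atTop (𝓝 0) := by
    have : Tendsto (fun r : ℝ ↦ -b * r ^ 2) atTop atBot :=
      (tendsto_pow_atTop two_ne_zero).const_mul_atTop_of_neg (neg_lt_zero.2 hb)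
    simpa using ((tendsto_exp_atBot.comp this).neg.div_const (2 * b))
  rw [integral_Ioi_of_hasDerivAt_of_nonneg' (fun r _ ↦ hderiv r)
    (fun r hr ↦ mul_nonneg (ha.trans hr.le) (exp_pos _).le) hlim]
  ring

theorem setIntegral_le_sq_add_sq_exp_neg_mul {b t : ℝ} (hb : 0 < b) (ht : 0 ≤ t) :
    ∫ q in {q : ℝ × ℝ | t ≤ q.1 ^ 2 + q.2 ^ 2}, exp (-b * (q.1 ^ 2 + q.2 ^ 2))
      = π / b * exp (-b * t) := by
  have hS : MeasurableSet {q : ℝ × ℝ | t ≤ q.1 ^ 2 + q.2 ^ 2} :=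
    measurableSet_le measurable_const (by fun_prop)
  calc _ = ∫ q, {q : ℝ × ℝ | t ≤ q.1 ^ 2 + q.2 ^ 2}.indicator
        (fun q ↦ exp (-b * (q.1 ^ 2 + q.2 ^ 2))) q := (integral_indicator hS).symm
    _ = ∫ p in polarCoord.target, p.1 • {q : ℝ × ℝ | t ≤ q.1 ^ 2 + q.2 ^ 2}.indicator
        (fun q ↦ exp (-b * (q.1 ^ 2 + q.2 ^ 2))) (polarCoord.symm p) :=
      (integral_comp_polarCoord_symm _).symm
    _ = ∫ p in Ioi 0 ×ˢ Ioo (-π) π,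
        (Ici √t).indicator (fun r ↦ r * exp (-b * r ^ 2)) p.1 * 1 := by
      rw [polarCoord_target]
      refine setIntegral_congr_fun (measurableSet_Ioi.prod measurableSet_Ioo) fun p hp ↦ ?_
      have hr : (p.1 * cos p.2) ^ 2 + (p.1 * sin p.2) ^ 2 = p.1 ^ 2 := by
        linear_combination p.1 ^ 2 * cos_sq_add_sin_sq p.2
      simp only [polarCoord_symm_apply, indicator_apply, mem_ofPred_eq, mem_Ici, hr,
        sqrt_le_left hp.1.out.le, smul_eq_mul, mul_one]
      split_ifs <;> simp
    _ = (∫ r in Ioi 0, (Ici √t).indicator (fun r ↦ r * exp (-b * r ^ 2)) r) *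
        ∫ _ in Ioo (-π) π, (1 : ℝ) := by
      rw [Measure.volume_eq_prod]
      exact setIntegral_prod_mul (fun r ↦ (Ici √t).indicator (fun r ↦ r * exp (-b * r ^ 2)) r)
        (fun _ ↦ (1 : ℝ)) _ _
    _ = exp (-b * t) / (2 * b) * (2 * π) := by
      rw [← integral_Ici_eq_integral_Ioi, setIntegral_indicator measurableSet_Ici, Ici_inter_Ici,
        max_eq_right (sqrt_nonneg t), integral_Ici_eq_integral_Ioi,
        integral_Ioi_mul_exp_neg_mul_sq (sqrt_nonneg t) hb, sq_sqrt ht]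
      simp [volume_real_Ioo_of_le (by linarith [pi_pos] : -π ≤ π), two_mul]
    _ = π / b * exp (-b * t) := by
      field_simp

theorem mul_exp_neg_mul_le_iff {A c x s : ℝ} (hA : 0 < A) (hc : 0 < c) (hx : 0 < x) :
    A * exp (-c * s) ≤ x ↔ log (A / x) / c ≤ s := by
  rw [← le_div_iff₀' hA, ← log_le_log_iff (exp_pos _) (div_pos hx hA), log_exp,
    div_le_iff₀ hc, log_div hA.ne' hx.ne', log_div hx.ne' hA.ne']
  constructor <;> intro h <;> linarith

theorem mul_exp_neg_mul_mem_Ioc {A c s : ℝ} (hA : 0 < A) (hc : 0 ≤ c) (hs : 0 ≤ s) :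
    A * exp (-c * s) ∈ Ioc 0 A :=
  ⟨mul_pos hA (exp_pos _), mul_le_of_le_one_right hA.le
    (exp_le_one_iff.2 (mul_nonpos_of_nonpos_of_nonneg (neg_nonpos.2 hc) hs))⟩

theorem gaussianPDFReal_mul_gaussianPDFReal (v : ℝ≥0) (x y : ℝ) :
    gaussianPDFReal 0 v x * gaussianPDFReal 0 v y
      = (2 * π * (v : ℝ))⁻¹ * exp (-(2 * (v : ℝ))⁻¹ * (x ^ 2 + y ^ 2)) := by
  simp only [gaussianPDFReal, sub_zero]
  rw [mul_mul_mul_comm, ← mul_inv, mul_self_sqrt (by positivity), ← exp_add]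
  congr 2
  ring

theorem gaussianReal_prod_setOf_le_sq_add_sq {v : ℝ≥0} (hv : v ≠ 0) {t : ℝ} (ht : 0 ≤ t) :
    (gaussianReal 0 v).prod (gaussianReal 0 v) {q | t ≤ q.1 ^ 2 + q.2 ^ 2}
      = ENNReal.ofReal (exp (-t / (2 * v))) := by
  have hS : MeasurableSet {q : ℝ × ℝ | t ≤ q.1 ^ 2 + q.2 ^ 2} :=
    measurableSet_le measurable_const (by fun_prop)
  have hv₀ : (0 : ℝ) < v := NNReal.coe_pos.2 (pos_iff_ne_zero.2 hv)
  have hint : Integrable fun q : ℝ × ℝ ↦ gaussianPDFReal 0 v q.1 * gaussianPDFReal 0 v q.2 := by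
    rw [Measure.volume_eq_prod]
    exact (integrable_gaussianPDFReal 0 v).mul_prod (integrable_gaussianPDFReal 0 v)
  rw [gaussianReal_of_var_ne_zero 0 hv,
    prod_withDensity (measurable_gaussianPDF 0 v) (measurable_gaussianPDF 0 v),
    ← Measure.volume_eq_prod, withDensity_apply _ hS]
  simp only [gaussianPDF, ← ENNReal.ofReal_mul (gaussianPDFReal_nonneg _ _ _)]
  rw [← ofReal_integral_eq_lintegral_ofReal hint.integrableOn <|
    ae_of_all _ fun q ↦ mul_nonneg (gaussianPDFReal_nonneg _ _ _) (gaussianPDFReal_nonneg _ _ _)]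
  simp_rw [gaussianPDFReal_mul_gaussianPDFReal]
  rw [integral_const_mul, setIntegral_le_sq_add_sq_exp_neg_mul (by positivity) ht]
  congr 1
  field_simp

section GaussianPair

variable {Ω : Type*} [MeasurableSpace Ω] {μ : Measure Ω} [IsFiniteMeasure μ] {X Y : Ω → ℝ}
  {v : ℝ≥0}

theorem measure_setOf_le_sq_add_sq (hv : v ≠ 0) (hX : Measurable X) (hY : Measurable Y)
    (hindep : IndepFun X Y μ) (hlawX : μ.map X = gaussianReal 0 v)
    (hlawY : μ.map Y = gaussianReal 0 v) {t : ℝ} (ht : 0 ≤ t) :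
    μ {ω | t ≤ X ω ^ 2 + Y ω ^ 2} = ENNReal.ofReal (exp (-t / (2 * v))) := by
  have hjoint : μ.map (fun ω ↦ (X ω, Y ω)) = (gaussianReal 0 v).prod (gaussianReal 0 v) := by
    simpa only [hlawX, hlawY] using
      (indepFun_iff_map_prod_eq_prod_map_map hX.aemeasurable hY.aemeasurable).1 hindep
  rw [← gaussianReal_prod_setOf_le_sq_add_sq hv ht, ← hjoint,
    Measure.map_apply (hX.prodMk hY) (measurableSet_le measurable_const (by fun_prop))]
  rfl

theorem measure_mul_exp_neg_mul_sq_add_sq_le (hv : v ≠ 0) (hX : Measurable X)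
    (hY : Measurable Y) (hindep : IndepFun X Y μ) (hlawX : μ.map X = gaussianReal 0 v)
    (hlawY : μ.map Y = gaussianReal 0 v) {A c x : ℝ} (hA : 0 < A) (hc : 0 < c)
    (hx₀ : 0 ≤ x) (hxA : x ≤ A) :
    μ {ω | A * exp (-c * (X ω ^ 2 + Y ω ^ 2)) ≤ x}
      = ENNReal.ofReal ((x / A) ^ (1 / (2 * (v : ℝ) * c))) := by
  have hv₀ : (0 : ℝ) < v := NNReal.coe_pos.2 (pos_iff_ne_zero.2 hv)
  rcases hx₀.eq_or_lt with rfl | hx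
  · have hempty : {ω | A * exp (-c * (X ω ^ 2 + Y ω ^ 2)) ≤ 0} = ∅ :=
      eq_empty_of_forall_notMem fun ω hω ↦ (mul_pos hA (exp_pos _)).not_ge hω
    rw [hempty, zero_div, zero_rpow (by positivity), measure_empty, ENNReal.ofReal_zero]
  · have ht : 0 ≤ log (A / x) / c := div_nonneg (log_nonneg ((one_le_div hx).2 hxA)) hc.le
    simp_rw [mul_exp_neg_mul_le_iff hA hc hx]
    rw [measure_setOf_le_sq_add_sq hv hX hY hindep hlawX hlawY ht,
      rpow_def_of_pos (div_pos hx hA), log_div hA.ne' hx.ne', log_div hx.ne' hA.ne']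
    congr 2
    field_simp
    ring

end GaussianPair

noncomputable def powerLawPDFReal (A ϱ x : ℝ) : ℝ := ϱ / A * (x / A) ^ (ϱ - 1)

noncomputable def powerLawPDF (A ϱ x : ℝ) : ℝ≥0∞ :=
  ENNReal.ofReal (if 0 < x ∧ x < A then powerLawPDFReal A ϱ x else 0)

theorem powerLawPDFReal_of_nonneg {A ϱ x : ℝ} (hA : 0 < A) (hx : 0 ≤ x) :
    powerLawPDFReal A ϱ x = ϱ / A ^ ϱ * x ^ (ϱ - 1) := by
  rw [powerLawPDFReal, div_rpow hx hA.le, rpow_sub_one hA.ne']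
  field_simp

theorem powerLawPDFReal_nonneg {A ϱ x : ℝ} (hA : 0 < A) (hϱ : 0 ≤ ϱ) (hx : 0 ≤ x) :
    0 ≤ powerLawPDFReal A ϱ x := by
  rw [powerLawPDFReal_of_nonneg hA hx]
  positivity

theorem integral_powerLawPDFReal {A ϱ b : ℝ} (hA : 0 < A) (hϱ : 0 < ϱ) (hb : 0 ≤ b) :
    ∫ x in 0..b, powerLawPDFReal A ϱ x = (b / A) ^ ϱ := by
  rw [intervalIntegral.integral_congr fun x hx ↦
      powerLawPDFReal_of_nonneg hA ((uIcc_of_le hb ▸ hx).1),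
    intervalIntegral.integral_const_mul, integral_rpow (Or.inl (by linarith)), sub_add_cancel,
    zero_rpow hϱ.ne', sub_zero, div_rpow hb hA.le]
  field_simp

theorem intervalIntegrable_powerLawPDFReal {A ϱ b : ℝ} (hA : 0 < A) (hϱ : 0 < ϱ) (hb : 0 ≤ b) :
    IntervalIntegrable (powerLawPDFReal A ϱ) volume 0 b :=
  ((intervalIntegral.intervalIntegrable_rpow' (r := ϱ - 1) (by linarith)).const_mul
    (ϱ / A ^ ϱ)).congr_uIoo fun x hx ↦
      (powerLawPDFReal_of_nonneg hA (uIoo_of_le hb ▸ hx).1.le).symm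

theorem powerLawPDF_eq_indicator (A ϱ : ℝ) :
    powerLawPDF A ϱ = (Ioo 0 A).indicator fun x ↦ ENNReal.ofReal (powerLawPDFReal A ϱ x) := by
  ext x
  simp only [powerLawPDF, indicator_apply, mem_Ioo]
  split_ifs <;> simp

theorem withDensity_powerLawPDF_compl_Ioc (A ϱ : ℝ) :
    volume.withDensity (powerLawPDF A ϱ) (Ioc 0 A)ᶜ = 0 := by
  rw [powerLawPDF_eq_indicator, withDensity_indicator measurableSet_Ioo,
    withDensity_apply _ measurableSet_Ioc.compl, Measure.restrict_restrict measurableSet_Ioc.compl,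
    (disjoint_compl_left.mono_right Ioo_subset_Ioc_self).inter_eq, Measure.restrict_empty,
    lintegral_zero_measure]

theorem withDensity_powerLawPDF_Iic {A ϱ b : ℝ} (hA : 0 < A) (hϱ : 0 < ϱ) (hb₀ : 0 ≤ b)
    (hbA : b ≤ A) :
    volume.withDensity (powerLawPDF A ϱ) (Iic b) = ENNReal.ofReal ((b / A) ^ ϱ) := by
  have hset : (Iic b ∩ Ioo 0 A : Set ℝ) =ᵐ[volume] Ioc 0 b := by
    refine ((ae_eq_refl _).inter Ioo_ae_eq_Ioc).trans ?_
    rw [Iic_inter_Ioc_of_le hbA]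
    rfl
  have hint : IntegrableOn (powerLawPDFReal A ϱ) (Ioc 0 b) :=
    (intervalIntegrable_iff_integrableOn_Ioc_of_le hb₀).1
      (intervalIntegrable_powerLawPDFReal hA hϱ hb₀)
  have hnonneg : 0 ≤ᵐ[volume.restrict (Ioc 0 b)] powerLawPDFReal A ϱ :=
    (ae_restrict_iff' measurableSet_Ioc).2 <|
      ae_of_all _ fun x hx ↦ powerLawPDFReal_nonneg hA hϱ.le hx.1.le
  rw [powerLawPDF_eq_indicator, withDensity_indicator measurableSet_Ioo,
    withDensity_apply _ measurableSet_Iic, Measure.restrict_restrict measurableSet_Iic,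
    setLIntegral_congr hset, ← ofReal_integral_eq_lintegral_ofReal hint hnonneg,
    ← intervalIntegral.integral_of_le hb₀, integral_powerLawPDFReal hA hϱ hb₀]

theorem measure_Iic_eq_measure_Iic_max_min {ν : Measure ℝ} {A : ℝ} (hν : ν (Ioc 0 A)ᶜ = 0)
    (a : ℝ) : ν (Iic a) = ν (Iic (max 0 (min a A))) := by
  have h : Iic a ∩ Ioc 0 A = Iic (max 0 (min a A)) ∩ Ioc 0 A := by
    ext x
    simp only [mem_inter_iff, mem_Iic, mem_Ioc, le_max_iff, le_min_iff]
    constructor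
    · rintro ⟨hxa, hx₀, hxA⟩
      exact ⟨Or.inr ⟨hxa, hxA⟩, hx₀, hxA⟩
    · rintro ⟨h | h, hx₀, hxA⟩
      exacts [absurd h hx₀.not_ge, ⟨h.1, hx₀, hxA⟩]
  rw [← measure_inter_conull hν, h, measure_inter_conull hν]

/-- PDF of the geometric loss in the orthogonal case, Eq. (16): for independent
`X, Y ~ N(0,λ)` and `W = A₀ exp(−c(X² + Y²))` with `A₀, c > 0` and `ϱ = 1/(2λc)`, one
has `P(W ≤ x) = (x/A₀)^ϱ` for `0 ≤ x ≤ A₀`, and the law of `W` has Lebesgue density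
`f(x) = (ϱ/A₀)(x/A₀)^{ϱ−1}` on `(0, A₀)` and `0` elsewhere. -/
theorem geometric_loss_pdf_orthogonal {Ω : Type*} [MeasurableSpace Ω]
    (μ : Measure Ω) [IsProbabilityMeasure μ] (v : NNReal) (A₀ c : ℝ)
    (hv : 0 < v) (hA : 0 < A₀) (hc : 0 < c) (X Y : Ω → ℝ)
    (hX : Measurable X) (hY : Measurable Y) (hindep : IndepFun X Y μ)
    (hlawX : μ.map X = gaussianReal 0 v) (hlawY : μ.map Y = gaussianReal 0 v) :
    let W : Ω → ℝ := fun ω => A₀ * Real.exp (-c * (X ω ^ 2 + Y ω ^ 2))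
    let ϱ : ℝ := 1 / (2 * (v : ℝ) * c)
    (∀ x : ℝ, 0 ≤ x → x ≤ A₀ →
      μ {ω | W ω ≤ x} = ENNReal.ofReal ((x / A₀) ^ ϱ)) ∧
    μ.map W = volume.withDensity (fun x => ENNReal.ofReal (
      if 0 < x ∧ x < A₀ then ϱ / A₀ * (x / A₀) ^ (ϱ - 1) else 0)) := by
  intro W ϱ
  have hϱ : 0 < ϱ := by positivity
  have hW : Measurable W := by fun_prop
  have hcdf (x : ℝ) (hx₀ : 0 ≤ x) (hxA : x ≤ A₀) :
      μ {ω | W ω ≤ x} = ENNReal.ofReal ((x / A₀) ^ ϱ) :=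
    measure_mul_exp_neg_mul_sq_add_sq_le hv.ne' hX hY hindep hlawX hlawY hA hc hx₀ hxA
  have hWsupp : μ.map W (Ioc 0 A₀)ᶜ = 0 := by
    have hpre : W ⁻¹' Ioc 0 A₀ = univ :=
      eq_univ_of_forall fun ω ↦ mul_exp_neg_mul_mem_Ioc hA hc.le (by positivity)
    rw [Measure.map_apply hW measurableSet_Ioc.compl, preimage_compl, hpre, compl_univ,
      measure_empty]
  refine ⟨hcdf, ?_⟩
  change μ.map W = volume.withDensity (powerLawPDF A₀ ϱ)
  refine Measure.ext_of_Iic _ _ fun a ↦ ?_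
  have h₀ : 0 ≤ max 0 (min a A₀) := le_max_left _ _
  have hA' : max 0 (min a A₀) ≤ A₀ := max_le hA.le (min_le_right _ _)
  rw [measure_Iic_eq_measure_Iic_max_min hWsupp,
    measure_Iic_eq_measure_Iic_max_min (withDensity_powerLawPDF_compl_Ioc A₀ ϱ),
    Measure.map_apply hW measurableSet_Iic, withDensity_powerLawPDF_Iic hA hϱ h₀ hA']
  exact hcdf _ h₀ hA'
end
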